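/- Let C be a guarded pre-iterative category, let σ : Z ↪ Y be a summand, and let f : X → Y+X be guarded in the summand σ+id : Z+X ↪ Y+X. Then the solution f† : X → Y given by the iteration operator is σ-guarded. -/

import Mathlib

open CategoryTheory CategoryTheory.Limits

universe v u

/-- `(σ, σ')` form a binary coproduct cospan, i.e. a summand together with its complement. -/
def IsCoprodCospan {C : Type u} [Category.{v} C] {Y' Y'' Y : C}
    (σ : Y' ⟶ Y) (σ' : Y'' ⟶ Y) : Prop :=
  Nonempty (IsColimit (BinaryCofan.mk σ σ'))

/-- A notion of abstract guardedness on a category. -/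
structure Guardedness (C : Type u) [Category.{v} C] where
  guarded : ∀ {X Y' Y'' Y : C}, (X ⟶ Y) → (Y' ⟶ Y) → (Y'' ⟶ Y) → Prop
  trv : ∀ {X Y Z P : C} (i₁ : Y ⟶ P) (i₂ : Z ⟶ P), IsCoprodCospan i₁ i₂ →
      ∀ f : X ⟶ Y, guarded (f ≫ i₁) i₂ i₁
  par : ∀ {X Y P Z' Z'' Z : C} (j₁ : X ⟶ P) (j₂ : Y ⟶ P), IsCoprodCospan j₁ j₂ →
      ∀ (σ : Z' ⟶ Z) (σ' : Z'' ⟶ Z) (u : P ⟶ Z),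
      guarded (j₁ ≫ u) σ σ' → guarded (j₂ ≫ u) σ σ' → guarded u σ σ'
  cmp : ∀ {X Y Z P V' V'' V : C} (i₁ : Y ⟶ P) (i₂ : Z ⟶ P), IsCoprodCospan i₁ i₂ →
      ∀ (σ : V' ⟶ V) (σ' : V'' ⟶ V) (f : X ⟶ P) (u : P ⟶ V),
      guarded f i₂ i₁ → guarded (i₁ ≫ u) σ σ' → guarded (f ≫ u) σ σ'

/-- A guarded pre-iterative category: every `inr`-guarded `f : X ⟶ Y ⨿ X` has a chosen
solution `iter f` satisfying the fixpoint identity `f† = [id, f†] ∘ f`. -/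
structure PreIterative (C : Type u) [Category.{v} C] [HasBinaryCoproducts C]
    extends Guardedness C where
  iter : ∀ {X Y : C} (f : X ⟶ Y ⨿ X),
      guarded f (coprod.inr : X ⟶ Y ⨿ X) coprod.inl → (X ⟶ Y)
  iter_fixpoint : ∀ {X Y : C} (f : X ⟶ Y ⨿ X)
      (hf : guarded f (coprod.inr : X ⟶ Y ⨿ X) coprod.inl),
      iter f hf = f ≫ coprod.desc (𝟙 Y) (iter f hf)

/-!
Unfolding `f† = [id, f†] ∘ f` and reading `Y ⨿ X` as the coproduct of `Z'` and `Z ⨿ X` along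
`σbar ≫ inl` and `σ + id`, the rule (cmp) reduces the claim to `σ`-guardedness of
`[id, f†] ∘ inl ∘ σbar = σbar`, which is an instance of (trv).
-/

section

variable {C : Type u} [Category.{v} C]

theorem IsCoprodCospan.symm {Y' Y'' Y : C}
    {σ : Y' ⟶ Y} {σ' : Y'' ⟶ Y} (h : IsCoprodCospan σ σ') : IsCoprodCospan σ' σ :=
  ⟨BinaryCofan.isColimitFlip h.some⟩

theorem isCoprodCospan_iff {Y' Y'' Y : C}
    (σ : Y' ⟶ Y) (σ' : Y'' ⟶ Y) :
    IsCoprodCospan σ σ' ↔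
      ∀ {T : C} (a : Y' ⟶ T) (b : Y'' ⟶ T), ∃! d : Y ⟶ T, σ ≫ d = a ∧ σ' ≫ d = b := by
  constructor
  · rintro ⟨h⟩ T a b
    exact ⟨BinaryCofan.IsColimit.desc h a b,
      ⟨BinaryCofan.IsColimit.inl_desc h a b, BinaryCofan.IsColimit.inr_desc h a b⟩,
      fun d ⟨ha, hb⟩ => BinaryCofan.IsColimit.hom_ext h
        (ha.trans (BinaryCofan.IsColimit.inl_desc h a b).symm)
        (hb.trans (BinaryCofan.IsColimit.inr_desc h a b).symm)⟩
  · intro h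
    choose d hd huniq using @h
    exact ⟨BinaryCofan.IsColimit.mk _ d (fun a b => (hd a b).1) (fun a b => (hd a b).2)
      fun a b m ha hb => huniq a b m ⟨ha, hb⟩⟩

theorem IsCoprodCospan.comp_inl_map {X Y Z Z' : C}
    [HasBinaryCoproduct Y X] [HasBinaryCoproduct Z X]
    {σ : Z ⟶ Y} {σbar : Z' ⟶ Y} (h : IsCoprodCospan σ σbar) :
    IsCoprodCospan (σbar ≫ (coprod.inl : Y ⟶ Y ⨿ X)) (coprod.map σ (𝟙 X)) := by
  rw [isCoprodCospan_iff] at h ⊢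
  intro T a b
  obtain ⟨d, ⟨hσd, hσbard⟩, hd⟩ := h (coprod.inl ≫ b) a
  refine ⟨coprod.desc d (coprod.inr ≫ b), ⟨by simpa [coprod.inl_desc] using hσbard, ?_⟩, ?_⟩
  · ext
    · simp [coprod.inl_desc, hσd]
    · simp [coprod.inr_desc]
  · rintro e ⟨ha, hb⟩
    subst hb
    ext
    · refine (hd _ ⟨?_, ?_⟩).trans (coprod.inl_desc _ _).symm <;> simp [← ha]
    · simp [coprod.inr_desc]

theorem Guardedness.guarded_complement (G : Guardedness C)
    {Z Z' Y : C} {σ : Z ⟶ Y} {σbar : Z' ⟶ Y} (hσ : IsCoprodCospan σ σbar) :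
    G.guarded σbar σ σbar := by
  simpa using G.trv σbar σ hσ.symm (𝟙 Z')

end

theorem iter_preserves_guardedness {C : Type u} [Category.{v} C] [HasBinaryCoproducts C]
    (G : PreIterative C) {X Y Z Z' : C}
    (σ : Z ⟶ Y) (σbar : Z' ⟶ Y) (hσ : IsCoprodCospan σ σbar)
    (f : X ⟶ Y ⨿ X)
    (hf : G.guarded f (coprod.map σ (𝟙 X)) (σbar ≫ coprod.inl))
    (hf' : G.guarded f (coprod.inr : X ⟶ Y ⨿ X) coprod.inl) :
    G.guarded (G.iter f hf') σ σbar := by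
  have hσbar : G.guarded ((σbar ≫ coprod.inl) ≫ coprod.desc (𝟙 Y) (G.iter f hf')) σ σbar := by
    simpa [coprod.inl_desc] using G.guarded_complement hσ
  rw [G.iter_fixpoint f hf']
  exact G.cmp _ _ hσ.comp_inl_map σ σbar f _ hf hσbar
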